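/- arXiv:2512.22873 — 3 statements merged into one kernel-verified Lean document; each statement's English description precedes it below -/
import Mathlib

section
/- For real numbers 0 ≤ x_1 ≤ ... ≤ x_ω ≤ 1 with x_1 < x_ω, let d(z) = max_j |z - x_j|, Δ = max_{z∈[0,1]} d(z), δ = min_{z∈[0,1]} d(z), and c = (x_1+x_ω)/2. Then for every y ∈ [0,1], (d(y) - δ)/(Δ - δ) = |y - c| / max(c, 1 - c). -/
theorem stmt_1 (ω : ℕ) (x : Fin (ω + 1) → ℝ) (hmono : Monotone x)
    (hx : ∀ j, x j ∈ Set.Icc (0 : ℝ) 1) (hlt : x 0 < x (Fin.last ω))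
    (d : ℝ → ℝ) (hd : ∀ z, d z = Finset.univ.sup' Finset.univ_nonempty (fun j => |z - x j|))
    (Δ δ : ℝ)
    (hΔ : IsGreatest (d '' Set.Icc (0 : ℝ) 1) Δ)
    (hδ : IsLeast (d '' Set.Icc (0 : ℝ) 1) δ)
    (c : ℝ) (hc : c = (x 0 + x (Fin.last ω)) / 2) :
    ∀ y ∈ Set.Icc (0 : ℝ) 1,
      (d y - δ) / (Δ - δ) = |y - c| / max c (1 - c) := by
  set a := x 0 with ha
  set b := x (Fin.last ω) with hb
  have ha0 : (0 : ℝ) ≤ a := (hx 0).1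
  have hb1 : b ≤ 1 := (hx (Fin.last ω)).2
  set r := (b - a) / 2 with hr
  have hrpos : 0 < r := by rw [hr]; linarith
  -- d z = r + |z - c|
  have hdval : ∀ z : ℝ, d z = r + |z - c| := by
    intro z
    rw [hd z]
    apply le_antisymm
    · apply Finset.sup'_le
      intro j _
      have h1 : a ≤ x j := hmono (Fin.zero_le j)
      have h2 : x j ≤ b := hmono (Fin.le_last j)
      rcases abs_cases (z - c) with ⟨h, h'⟩ | ⟨h, h'⟩ <;>
        rcases abs_cases (z - x j) with ⟨g, g'⟩ | ⟨g, g'⟩ <;>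
        rw [h, g] <;> linarith
    · rcases le_or_gt z c with h | h
      · have hle : r + |z - c| ≤ |z - b| := by
          rw [abs_of_nonpos (by linarith)]
          rcases abs_cases (z - b) with ⟨g, g'⟩ | ⟨g, g'⟩ <;> rw [g] <;> linarith
        exact hle.trans (Finset.le_sup' (fun j => |z - x j|) (Finset.mem_univ (Fin.last ω)))
      · have hle : r + |z - c| ≤ |z - a| := by
          rw [abs_of_pos (by linarith)]
          rcases abs_cases (z - a) with ⟨g, g'⟩ | ⟨g, g'⟩ <;> rw [g] <;> linarith
        exact hle.trans (Finset.le_sup' (fun j => |z - x j|) (Finset.mem_univ 0))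
  have hcmem : c ∈ Set.Icc (0 : ℝ) 1 := by
    rw [hc, Set.mem_Icc]; constructor <;> linarith
  -- δ = r
  have hδr : δ = r := by
    refine hδ.unique ⟨⟨c, hcmem, by simp [hdval]⟩, ?_⟩
    rintro _ ⟨z, _, rfl⟩
    rw [hdval]
    have := abs_nonneg (z - c); linarith
  have hMpos : 0 < max c (1 - c) := by
    rcases le_total c (1/2) with h | h
    · exact lt_of_lt_of_le (by linarith) (le_max_right _ _)
    · exact lt_of_lt_of_le (by linarith) (le_max_left _ _)
  -- Δ = r + M
  have hΔr : Δ = r + max c (1 - c) := by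
    refine hΔ.unique ⟨?_, ?_⟩
    · rcases le_total c (1 - c) with h | h
      · refine ⟨1, by simp, ?_⟩
        rw [hdval, max_eq_right h, abs_of_nonneg (by linarith [hcmem.2])]
      · refine ⟨0, by simp, ?_⟩
        rw [hdval, max_eq_left h, abs_of_nonpos (by linarith [hcmem.1])]
        ring
    · rintro _ ⟨z, hz, rfl⟩
      rw [hdval]
      have hab : |z - c| ≤ max c (1 - c) := by
        rw [abs_le]
        constructor
        · have := le_max_left c (1 - c); linarith [hz.1]
        · have := le_max_right c (1 - c); linarith [hz.2]
      linarith
  intro y _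
  rw [hdval, hδr, hΔr]
  ring_nf
end

section
/- Let x_1 ≤ ... ≤ x_ω be real numbers in [0,1], let m = x_⌈ω/2⌉ be the (left) median, and suppose Σ_j x_j ≥ Σ_j (1 - x_j). Then Σ_j x_j - Σ_j |x_j - 1/2| ≥ (1/2)(Σ_j x_j - Σ_j |x_j - m|). -/
theorem stmt_4 (ω : ℕ) (x : Fin (ω + 1) → ℝ) (hmono : Monotone x)
    (hx : ∀ j, x j ∈ Set.Icc (0 : ℝ) 1)
    (m : ℝ) (hm : m = x ⟨ω / 2, by omega⟩)
    (h : ∑ j, x j ≥ ∑ j, (1 - x j)) :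
    ∑ j, x j - ∑ j, |x j - 1 / 2| ≥ (1 / 2) * (∑ j, x j - ∑ j, |x j - m|) := by
  set t : ℝ → ℝ := fun y => y / 2 - |y - 1 / 2| + |y - m| / 2 with ht
  have hrev : ∀ f : Fin (ω + 1) → ℝ, ∑ j : Fin (ω + 1), f j.rev = ∑ j, f j := fun f =>
    Equiv.sum_comp (Function.Involutive.toPerm Fin.rev Fin.rev_rev) f
  -- bounds on pairs
  have hpair : ∀ j : Fin (ω + 1), x j ≤ m ∧ m ≤ x j.rev ∨ x j.rev ≤ m ∧ m ≤ x j := by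
    intro j
    have hv : (j.rev : ℕ) = ω - (j : ℕ) := by
      simp [Fin.val_rev]
    rcases le_or_gt (j : ℕ) (ω / 2) with hc | hc
    · left
      constructor
      · rw [hm]; exact hmono (by rw [Fin.le_def]; simp; omega)
      · rw [hm]; exact hmono (by rw [Fin.le_def]; simp only [hv]; omega)
    · right
      constructor
      · rw [hm]; exact hmono (by rw [Fin.le_def]; simp only [hv]; omega)
      · rw [hm]; exact hmono (by rw [Fin.le_def]; simp; omega)
  have hsum1 : ∑ j, (1 - x j) = (ω + 1 : ℝ) - ∑ j, x j := by
    rw [Finset.sum_sub_distrib]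
    simp
  have hS : (ω + 1 : ℝ) / 2 ≤ ∑ j, x j := by
    rw [hsum1] at h; linarith
  have et : ∑ j, t (x j)
      = (∑ j, x j) / 2 - ∑ j, |x j - 1 / 2| + (∑ j, |x j - m|) / 2 := by
    simp only [ht]
    rw [Finset.sum_add_distrib, Finset.sum_sub_distrib, Finset.sum_div, Finset.sum_div]
  have hm0 : 0 ≤ m ∧ m ≤ 1 := by rw [hm]; exact ⟨(hx _).1, (hx _).2⟩
  rcases le_total (1 / 2 : ℝ) m with hm2 | hm2
  · -- case m ≥ 1/2 : t a + t b ≥ 0 for a ≤ m ≤ b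
    have key : ∀ a b : ℝ, 0 ≤ a → a ≤ m → m ≤ b → b ≤ 1 → 0 ≤ t a + t b := by
      intro a b ha ham hmb hb1
      simp only [ht]
      rw [abs_of_nonneg (by linarith : (0:ℝ) ≤ b - 1/2),
          abs_of_nonneg (by linarith : (0:ℝ) ≤ b - m),
          abs_of_nonpos (by linarith : a - m ≤ 0)]
      rcases le_total a (1/2) with h1 | h1
      · rw [abs_of_nonpos (by linarith : a - 1/2 ≤ 0)]; linarith
      · rw [abs_of_nonneg (by linarith : (0:ℝ) ≤ a - 1/2)]; linarith
    have hnn : 0 ≤ ∑ j, (t (x j) + t (x j.rev)) := by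
      apply Finset.sum_nonneg
      intro j _
      rcases hpair j with ⟨h1, h2⟩ | ⟨h1, h2⟩
      · exact key _ _ (hx j).1 h1 h2 (hx j.rev).2
      · have := key _ _ (hx j.rev).1 h1 h2 (hx j).2
        linarith
    rw [Finset.sum_add_distrib, hrev (fun j => t (x j))] at hnn
    rw [et] at hnn
    linarith
  · -- case m ≤ 1/2 : use u y = t y - (y - 1/2)
    have key : ∀ a b : ℝ, 0 ≤ a → a ≤ m → m ≤ b → b ≤ 1 →
        0 ≤ (t a - (a - 1/2)) + (t b - (b - 1/2)) := by
      intro a b ha ham hmb hb1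
      simp only [ht]
      rw [abs_of_nonpos (by linarith : a - 1/2 ≤ 0),
          abs_of_nonpos (by linarith : a - m ≤ 0),
          abs_of_nonneg (by linarith : (0:ℝ) ≤ b - m)]
      rcases le_total b (1/2) with h1 | h1
      · rw [abs_of_nonpos (by linarith : b - 1/2 ≤ 0)]; linarith
      · rw [abs_of_nonneg (by linarith : (0:ℝ) ≤ b - 1/2)]; linarith
    have hnn : 0 ≤ ∑ j, ((t (x j) - (x j - 1/2)) + (t (x j.rev) - (x j.rev - 1/2))) := by
      apply Finset.sum_nonneg
      intro j _
      rcases hpair j with ⟨h1, h2⟩ | ⟨h1, h2⟩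
      · exact key _ _ (hx j).1 h1 h2 (hx j.rev).2
      · have := key _ _ (hx j.rev).1 h1 h2 (hx j).2
        linarith
    rw [Finset.sum_add_distrib, hrev (fun j => t (x j) - (x j - 1/2)),
        Finset.sum_sub_distrib, Finset.sum_sub_distrib] at hnn
    simp only [Finset.sum_const, Finset.card_univ, Fintype.card_fin, nsmul_eq_mul] at hnn
    rw [et] at hnn
    push_cast at hnn hS
    linarith
end

section
/- For every c ∈ [0,1], letting y = min(max(c, 1/5), 4/5) (the clamp of c to [1/5, 4/5]), we have 1 - |y - c| / max(c, 1 - c) ≥ 4/5. -/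
theorem stmt_15 (c : ℝ) (hc : c ∈ Set.Icc (0 : ℝ) 1) :
    1 - |min (max c (1 / 5)) (4 / 5) - c| / max c (1 - c) ≥ 4 / 5 := by
  obtain ⟨h0, h1⟩ := hc
  rcases le_total c (1/5) with hl | hl
  · have hmax : max c (1/5) = 1/5 := max_eq_right hl
    have hmin : min (1/5 : ℝ) (4/5) = 1/5 := by norm_num
    have hm : max c (1 - c) = 1 - c := max_eq_right (by linarith)
    rw [hmax, hmin, hm, abs_of_nonneg (by linarith)]
    have key : (1/5 - c)/(1-c) ≤ 1/5 := by
      rw [div_le_iff₀ (by linarith)]; linarith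
    linarith
  · rcases le_total c (4/5) with hr | hr
    · have hmax : max c (1/5) = c := max_eq_left hl
      rw [hmax, min_eq_left hr, sub_self, abs_zero, zero_div]
      norm_num
    · have hmax : max c (1/5) = c := max_eq_left (by linarith)
      have hmin : min c (4/5 : ℝ) = 4/5 := min_eq_right hr
      have hm : max c (1 - c) = c := max_eq_left (by linarith)
      rw [hmax, hmin, hm, abs_of_nonpos (by linarith), neg_sub]
      have key : (c - 4/5)/c ≤ 1/5 := by
        rw [div_le_iff₀ (by linarith)]; linarith
      linarith
end
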